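/- arXiv:1901.05947 — 3 statements merged into one kernel-verified Lean document; each statement's English description precedes it below -/
import Mathlib

section
/- Let σ > 0, let μ ∈ (0, σ], and let β ∈ (0, 1/6]. Define s₀ = (20σ²/μ²)·log((2/β)·log(40σ²/(βμ²))). Then √((5σ²/s₀)·log(log(s₀)/β)) ≤ μ/2. -/
open Real

/-- **Shrinkage of the iterated-logarithm confidence radius.**
For `σ > 0`, `μ ∈ (0, σ]`, `β ∈ (0, 1/6]` and
`s₀ = (20σ²/μ²)·log((2/β)·log(40σ²/(βμ²)))`, the confidence radius after `s₀`
samples satisfies `√((5σ²/s₀)·log(log(s₀)/β)) ≤ μ/2`. -/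
theorem confidence_radius_shrinks_below_half_mean
    (σ μ β : ℝ) (hσ : 0 < σ) (hμ : 0 < μ) (hμσ : μ ≤ σ) (hβ : 0 < β) (hβ6 : β ≤ 1/6)
    (s₀ : ℝ) (hs₀ : s₀ = 20 * σ^2 / μ^2 * Real.log (2 / β * Real.log (40 * σ^2 / (β * μ^2)))) :
    Real.sqrt (5 * σ^2 / s₀ * Real.log (Real.log s₀ / β)) ≤ μ / 2 := by
  have hμ2 : (0:ℝ) < μ^2 := by positivity
  set A := 20 * σ^2 / μ^2 with hA
  set B := 2 / β with hB
  have hA20 : (20:ℝ) ≤ A := by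
    rw [hA, le_div_iff₀ hμ2]
    nlinarith
  have hB12 : (12:ℝ) ≤ B := by
    rw [hB, le_div_iff₀ hβ]; linarith
  have hA0 : (0:ℝ) < A := by linarith
  have hB0 : (0:ℝ) < B := by linarith
  have hBA : 40 * σ^2 / (β * μ^2) = B * A := by
    rw [hB, hA]; field_simp; ring
  rw [hBA] at hs₀
  set L := Real.log (B * A) with hL
  have hBA240 : (240:ℝ) ≤ B * A := by nlinarith
  have hL1 : (1:ℝ) ≤ L := by
    rw [hL, Real.le_log_iff_exp_le (by linarith)]
    calc Real.exp 1 ≤ 2.7182818286 := Real.exp_one_lt_d9.le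
    _ ≤ 240 := by norm_num
    _ ≤ B * A := hBA240
  have hBL12 : (12:ℝ) ≤ B * L := by nlinarith
  have hlogBL1 : (1:ℝ) ≤ Real.log (B * L) := by
    rw [Real.le_log_iff_exp_le (by linarith)]
    calc Real.exp 1 ≤ 2.7182818286 := Real.exp_one_lt_d9.le
    _ ≤ 12 := by norm_num
    _ ≤ B * L := hBL12
  have hlogBL0 : (0:ℝ) < Real.log (B * L) := by linarith
  have hs : s₀ = A * Real.log (B * L) := hs₀
  have hs20 : (20:ℝ) ≤ s₀ := by
    rw [hs]; nlinarith
  have hs0 : (0:ℝ) < s₀ := by linarith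
  -- s₀ ≤ (A*B)^2
  have hLle : L ≤ B * A := Real.log_le_self (by linarith)
  have hsle : s₀ ≤ (A * B)^2 := by
    have h1 : Real.log (B * L) ≤ B * L := Real.log_le_self (by linarith)
    have h2 : B * L ≤ B * (B * A) := by nlinarith
    rw [hs]; nlinarith
  have hlogs : Real.log s₀ ≤ 2 * L := by
    calc Real.log s₀ ≤ Real.log ((A * B)^2) := Real.log_le_log hs0 hsle
    _ = 2 * Real.log (A * B) := by
        rw [show ((A*B)^2 : ℝ) = (A*B)*(A*B) by ring,
          Real.log_mul (by positivity) (by positivity)]; ring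
    _ = 2 * L := by rw [hL, mul_comm A B]
  have hlogs0 : (0:ℝ) < Real.log s₀ := Real.log_pos (by linarith)
  have hx0 : (0:ℝ) < Real.log s₀ / β := by positivity
  have hxle : Real.log s₀ / β ≤ B * L := by
    rw [div_le_iff₀ hβ, hB]
    have : B * L * β = 2 * L := by rw [hB]; field_simp
    calc Real.log s₀ ≤ 2 * L := hlogs
    _ = 2 / β * L * β := by field_simp
  have hkey : Real.log (Real.log s₀ / β) ≤ Real.log (B * L) :=
    Real.log_le_log hx0 hxle
  -- final
  have hfrac : 5 * σ^2 / s₀ * Real.log (B * L) = μ^2 / 4 := by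
    rw [hs, hA]
    field_simp
    ring
  have hLHS : 5 * σ^2 / s₀ * Real.log (Real.log s₀ / β) ≤ (μ/2)^2 := by
    have h5 : (0:ℝ) ≤ 5 * σ^2 / s₀ := by positivity
    calc 5 * σ^2 / s₀ * Real.log (Real.log s₀ / β)
        ≤ 5 * σ^2 / s₀ * Real.log (B * L) := by
          exact mul_le_mul_of_nonneg_left hkey h5
    _ = μ^2 / 4 := hfrac
    _ = (μ/2)^2 := by ring
  calc Real.sqrt (5 * σ^2 / s₀ * Real.log (Real.log s₀ / β))
      ≤ Real.sqrt ((μ/2)^2) := Real.sqrt_le_sqrt hLHS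
  _ = μ / 2 := Real.sqrt_sq (by positivity)
end

section
/- Let p̌ ∈ (0,1), let σ > 0, and let G_1, G_2, … be i.i.d. real random variables with mean μ = E[G_t] > 0 such that G_t − μ is σ²-sub-Gaussian. Let τ = min{s ≥ 3 : |(1/s) Σ_{t=1}^s G_t| > √((5σ²/s)·log(6·log(s)/√p̌))} be the termination time of the sequential test. Then for every integer n ≥ 3 satisfying √((5σ²/n)·log(6·log(n)/√p̌)) ≤ μ/2, one has P(τ > n) ≤ exp(−nμ²/(8σ²)). -/
/-!
If `τ > n`, the test has not stopped at time `n`, so the sample mean lies in the band, whose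
radius is at most `m / 2`; hence the centred sum `∑_{t ≤ n} (G t - m)` is at most `-n m / 2`.
The centred variables are independent and `σ²`-sub-Gaussian, so Hoeffding's inequality bounds
the probability of this by `exp (-(n m / 2)² / (2 n σ²)) = exp (-n m² / (8 σ²))`.
-/

open MeasureTheory ProbabilityTheory Real Finset

open scoped NNReal

section SubGaussian

variable {Ω : Type*} [MeasurableSpace Ω] {μ : Measure Ω}

lemma hasSubgaussianMGF_of_lintegral_exp_le {X : Ω → ℝ} {c : ℝ≥0} (hX : AEMeasurable X μ)
    (h : ∀ t : ℝ, ∫⁻ ω, ENNReal.ofReal (exp (t * X ω)) ∂μ ≤ ENNReal.ofReal (exp (t ^ 2 * c / 2))) :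
    HasSubgaussianMGF X c μ where
  integrable_exp_mul t := by
    refine ⟨(hX.const_mul t).exp.aestronglyMeasurable, ?_⟩
    rw [hasFiniteIntegral_iff_ofReal (ae_of_all _ fun ω ↦ (exp_pos _).le)]
    exact (h t).trans_lt ENNReal.ofReal_lt_top
  mgf_le t := by
    rw [mgf, integral_eq_lintegral_of_nonneg_ae (ae_of_all _ fun ω ↦ (exp_pos _).le)
      (hX.const_mul t).exp.aestronglyMeasurable, mul_comm (c : ℝ)]
    exact ENNReal.toReal_le_of_le_ofReal (exp_pos _).le (h t)

lemma measureReal_sum_le_neg_le_of_iIndepFun {ι : Type*} {X : ι → Ω → ℝ}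
    (h_indep : iIndepFun X μ) {c : ℝ≥0} {s : Finset ι}
    (h_subG : ∀ i ∈ s, HasSubgaussianMGF (X i) c μ) {ε : ℝ} (hε : 0 ≤ ε) :
    μ.real {ω | ∑ i ∈ s, X i ω ≤ -ε} ≤ exp (-ε ^ 2 / (2 * #s * c)) := by
  have h := HasSubgaussianMGF.measure_sum_ge_le_of_iIndepFun
    (h_indep.comp (fun _ x ↦ -x) fun _ ↦ measurable_neg) (c := fun _ ↦ c)
    (fun i hi ↦ (h_subG i hi).neg) hε
  simp only [Function.comp_apply, sum_neg_distrib, le_neg, sum_const, nsmul_eq_mul] at h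
  simpa [mul_assoc] using h

end SubGaussian

lemma sum_sub_le_neg_half_of_mean_le {ι : Type*} {s : Finset ι} {x : ι → ℝ} {m : ℝ}
    (h : 1 / (#s : ℝ) * ∑ i ∈ s, x i ≤ m / 2) :
    ∑ i ∈ s, (x i - m) ≤ -(#s * m / 2) := by
  rw [sum_sub_distrib, sum_const, nsmul_eq_mul]
  rcases s.eq_empty_or_nonempty with rfl | hs
  · simp
  · rw [one_div, inv_mul_le_iff₀ (mod_cast hs.card_pos)] at h
    linarith

theorem subgaussian_sequential_test_tail_bound_general
    {Ω : Type*} [MeasurableSpace Ω] (P : Measure Ω)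
    (pc σ m : ℝ)
    (G : ℕ → Ω → ℝ)
    (hmeas : ∀ t, Measurable (G t))
    (hindep : iIndepFun G P)
    (hsubG : ∀ t, ∀ l : ℝ,
      ∫⁻ ω, ENNReal.ofReal (Real.exp (l * (G t ω - m))) ∂P ≤
        ENNReal.ofReal (Real.exp (l^2 * σ^2 / 2)))
    (τ : Ω → ℕ∞)
    (hτ : ∀ ω, τ ω = sInf {s : ℕ∞ | ∃ k : ℕ, s = (k : ℕ∞) ∧ 3 ≤ k ∧
      Real.sqrt (5 * σ^2 / k * Real.log (6 * Real.log k / Real.sqrt pc)) <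
        |(1 / (k:ℝ)) * ∑ t ∈ Finset.Icc 1 k, G t ω|}) :
    ∀ n : ℕ, 3 ≤ n →
      Real.sqrt (5 * σ^2 / n * Real.log (6 * Real.log n / Real.sqrt pc)) ≤ m / 2 →
      P {ω | (n : ℕ∞) < τ ω} ≤ ENNReal.ofReal (Real.exp (-(n * m^2) / (8 * σ^2))) := by
  intro n hn hrad
  have := hindep.isProbabilityMeasure
  have hm0 : 0 ≤ m := by linarith [sqrt_nonneg (5 * σ ^ 2 / n * log (6 * log n / sqrt pc))]
  have hcard : #(Icc 1 n) = n := by simp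
  have hevent : {ω | (n : ℕ∞) < τ ω} ⊆ {ω | ∑ t ∈ Icc 1 n, (G t ω - m) ≤ -(n * m / 2)} := by
    intro ω hω
    have hinside := not_lt.1 fun hexit ↦
      not_lt_of_ge ((hτ ω).trans_le (sInf_le ⟨n, rfl, hn, hexit⟩)) hω
    have hmean := (le_abs_self _).trans (hinside.trans hrad)
    simpa [hcard] using
      sum_sub_le_neg_half_of_mean_le (s := Icc 1 n) (x := (G · ω)) (by rwa [hcard])
  have hsubG_centred : ∀ t, HasSubgaussianMGF (fun ω ↦ G t ω - m) (σ ^ 2).toNNReal P := fun t ↦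
    hasSubgaussianMGF_of_lintegral_exp_le ((hmeas t).sub_const m).aemeasurable
      (by simpa [Real.coe_toNNReal _ (sq_nonneg σ)] using hsubG t)
  have hhoeffding := measureReal_sum_le_neg_le_of_iIndepFun
    (hindep.comp (fun _ x ↦ x - m) fun _ ↦ measurable_sub_const m) (s := Icc 1 n)
    (fun t _ ↦ hsubG_centred t) (by positivity : 0 ≤ (n : ℝ) * m / 2)
  calc P {ω | (n : ℕ∞) < τ ω}
      ≤ ENNReal.ofReal (P.real {ω | ∑ t ∈ Icc 1 n, (G t ω - m) ≤ -(n * m / 2)}) := by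
        rw [ofReal_measureReal]; exact measure_mono hevent
    _ ≤ ENNReal.ofReal (exp (-(n * m ^ 2) / (8 * σ ^ 2))) := by
        refine ENNReal.ofReal_le_ofReal (hhoeffding.trans_eq ?_)
        rw [hcard, Real.coe_toNNReal _ (sq_nonneg σ)]
        congr 1
        calc -(n * m / 2) ^ 2 / (2 * n * σ ^ 2) = n * -(n * m ^ 2 / 4) / (n * (2 * σ ^ 2)) := by
              ring
          _ = -(n * m ^ 2) / (8 * σ ^ 2) := by
              rw [mul_div_mul_left _ _ (Nat.cast_ne_zero.2 (by omega))]; ring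

/-- **Tail bound for the termination time of the sub-Gaussian sequential test.**
If `G 1, G 2, …` are i.i.d. with mean `m > 0` and `G t − m` is `σ²`-sub-Gaussian, and
`τ` is the first `s ≥ 3` at which the sample mean exits the confidence band of radius
`√((5σ²/s)·log(6·log s/√p̌))`, then for every `n ≥ 3` at which the radius is at most
`m/2`, one has `P(τ > n) ≤ exp(−n m²/(8σ²))`. -/
theorem subgaussian_sequential_test_tail_bound
    {Ω : Type*} [MeasurableSpace Ω] (P : Measure Ω) [IsProbabilityMeasure P]
    (pc σ m : ℝ) (hpc : 0 < pc) (hpc1 : pc < 1) (hσ : 0 < σ) (hm : 0 < m)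
    (G : ℕ → Ω → ℝ)
    (hmeas : ∀ t, Measurable (G t))
    (hint : ∀ t, Integrable (G t) P)
    (hindep : iIndepFun G P)
    (hident : ∀ t, Measure.map (G t) P = Measure.map (G 0) P)
    (hmean : ∀ t, ∫ ω, G t ω ∂P = m)
    (hsubG : ∀ t, ∀ l : ℝ,
      ∫⁻ ω, ENNReal.ofReal (Real.exp (l * (G t ω - m))) ∂P ≤
        ENNReal.ofReal (Real.exp (l^2 * σ^2 / 2)))
    (τ : Ω → ℕ∞)
    (hτ : ∀ ω, τ ω = sInf {s : ℕ∞ | ∃ k : ℕ, s = (k : ℕ∞) ∧ 3 ≤ k ∧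
      Real.sqrt (5 * σ^2 / k * Real.log (6 * Real.log k / Real.sqrt pc)) <
        |(1 / (k:ℝ)) * ∑ t ∈ Finset.Icc 1 k, G t ω|}) :
    ∀ n : ℕ, 3 ≤ n →
      Real.sqrt (5 * σ^2 / n * Real.log (6 * Real.log n / Real.sqrt pc)) ≤ m / 2 →
      P {ω | (n : ℕ∞) < τ ω} ≤ ENNReal.ofReal (Real.exp (-(n * m^2) / (8 * σ^2))) :=
  subgaussian_sequential_test_tail_bound_general P pc σ m G hmeas hindep hsubG τ hτ
end

section
/- Let p̌ ∈ (0,1), let σ > 0, and let G_1, G_2, … be i.i.d. real random variables such that μ = E[G_t] satisfies 0 < |μ| ≤ σ and G_t − μ is σ²-sub-Gaussian. Let τ = min{s ≥ 3 : |(1/s) Σ_{t=1}^s G_t| > √((5σ²/s)·log(6·log(s)/√p̌))} be the termination time of the sequential test. Then E[τ] ≤ (40σ²/μ²)·log((12/√p̌)·log(240σ²/(√p̌·μ²))) + 2. -/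
/-!
Put `ρ = σ² / μ²` and `L = log ((12 / √p̌) · log (240 ρ / √p̌))`. For `n ≥ n₀ = ⌈20 ρ L⌉` the
squared band radius is at most `3μ²/8`, because `log (6 log n / √p̌) ≤ L + n / (40 ρ)`. A test
still running at such a time `n` therefore has its sample mean within `√(3/8) |μ|` of `0`, hence
at distance at least `√(3/20) |μ|` from `μ`; by Hoeffding's inequality for independent
sub-Gaussian sums this has probability at most `2 exp (-3nμ² / (40σ²))`. Summing the tails,
`E[τ] = ∑ₙ P(τ > n) ≤ n₀ + 2 / (1 - exp (-3 / (40 ρ))) ≤ n₀ + 2 + 80ρ/3`.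
-/

open MeasureTheory ProbabilityTheory Real
open scoped ENNReal NNReal

lemma ENat.natCast_lt_sInf_iff {p : ℕ → Prop} {n : ℕ} :
    (n : ℕ∞) < sInf {s : ℕ∞ | ∃ k : ℕ, s = k ∧ p k} ↔ ∀ k ≤ n, ¬ p k := by
  constructor
  · rintro h k hkn hk
    have : sInf {s : ℕ∞ | ∃ k : ℕ, s = k ∧ p k} ≤ k := sInf_le ⟨k, rfl, hk⟩
    exact (h.trans_le (this.trans (by exact_mod_cast hkn))).false
  · refine fun h ↦ (Nat.cast_lt.mpr n.lt_succ_self).trans_le (le_sInf ?_)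
    rintro _ ⟨k, rfl, hk⟩
    exact_mod_cast Nat.succ_le_of_lt (not_le.mp fun hkn ↦ h k hkn hk)

lemma ENat.toENNReal_eq_tsum_indicator (a : ℕ∞) :
    (a : ℝ≥0∞) = ∑' n : ℕ, {b : ℕ∞ | (n : ℕ∞) < b}.indicator 1 a := by
  induction a using ENat.recTopCoe with
  | top => simp
  | coe k =>
    rw [tsum_eq_sum (s := Finset.range k) fun n hn ↦ by simpa using hn]
    simp [Set.indicator_apply, Finset.filter_true_of_mem]

section StoppingTime

variable {Ω : Type*} [MeasurableSpace Ω] {τ : Ω → ℕ∞}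

lemma lintegral_toENNReal_eq_tsum_measure_lt {μ : Measure Ω}
    (hτ : ∀ n : ℕ, MeasurableSet {ω | (n : ℕ∞) < τ ω}) :
    ∫⁻ ω, (τ ω : ℝ≥0∞) ∂μ = ∑' n : ℕ, μ {ω | (n : ℕ∞) < τ ω} := by
  calc ∫⁻ ω, (τ ω : ℝ≥0∞) ∂μ = ∫⁻ ω, ∑' n : ℕ, {ω | (n : ℕ∞) < τ ω}.indicator 1 ω ∂μ :=
        lintegral_congr fun ω ↦ ENat.toENNReal_eq_tsum_indicator (τ ω)
    _ = ∑' n : ℕ, μ {ω | (n : ℕ∞) < τ ω} := by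
        rw [lintegral_tsum fun n ↦ (measurable_one.indicator (hτ n)).aemeasurable]
        exact tsum_congr fun n ↦ lintegral_indicator_one (hτ n)

lemma measurableSet_natCast_lt_sInf {p : ℕ → Ω → Prop}
    (hτ : ∀ ω, τ ω = sInf {s : ℕ∞ | ∃ k : ℕ, s = k ∧ p k ω})
    (hp : ∀ k, MeasurableSet {ω | p k ω}) (n : ℕ) : MeasurableSet {ω | (n : ℕ∞) < τ ω} := by
  simp_rw [hτ, ENat.natCast_lt_sInf_iff, Set.ofPred_forall]
  exact .iInter fun k ↦ .iInter fun _ ↦ (hp k).compl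

end StoppingTime

lemma ENNReal.tsum_le_natCast_add_mul_geometric {f : ℕ → ℝ≥0∞} {N : ℕ} {C r : ℝ≥0∞}
    (hf : ∀ n, f n ≤ 1) (hfN : ∀ n, N ≤ n → f n ≤ C * r ^ n) :
    ∑' n, f n ≤ N + C * (1 - r)⁻¹ := by
  calc ∑' n, f n ≤ ∑' n, ({i | i < N}.indicator 1 n + C * r ^ n) := by
        refine ENNReal.tsum_le_tsum fun n ↦ ?_
        by_cases hn : n < N
        · simpa [hn] using (hf n).trans le_self_add
        · simpa [hn] using hfN n (not_lt.mp hn)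
    _ = N + C * (1 - r)⁻¹ := by
        rw [ENNReal.tsum_add, ← tsum_subtype, Pi.one_def, ENNReal.tsum_set_one,
          ENNReal.tsum_mul_left, ENNReal.tsum_geometric]
        simp [Set.Nat.encard_range]

lemma ENNReal.inv_one_sub_ofReal_exp_neg_le {κ : ℝ} (hκ : 0 < κ) :
    (1 - ENNReal.ofReal (exp (-κ)))⁻¹ ≤ ENNReal.ofReal (1 + κ⁻¹) := by
  have hlt : exp (-κ) < 1 := exp_lt_one_iff.mpr (by linarith)
  rw [← ENNReal.ofReal_one, ← ENNReal.ofReal_sub _ (exp_pos _).le,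
    ← ENNReal.ofReal_inv_of_pos (by linarith)]
  refine ENNReal.ofReal_le_ofReal ?_
  have h : κ / (1 + κ) ≤ 1 - exp (-κ) := by
    rw [exp_neg, div_le_iff₀ (by linarith)]
    have := add_one_le_exp κ
    field_simp
    nlinarith [exp_pos κ]
  calc (1 - exp (-κ))⁻¹ ≤ (κ / (1 + κ))⁻¹ := inv_anti₀ (by positivity) h
    _ = 1 + κ⁻¹ := by field_simp; ring

section Subgaussian

variable {Ω : Type*} [MeasurableSpace Ω] {μ : Measure Ω} {X : Ω → ℝ} {c : ℝ≥0}

lemma ProbabilityTheory.HasSubgaussianMGF.of_lintegral_exp_le (hX : AEMeasurable X μ)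
    (h : ∀ t : ℝ, ∫⁻ ω, ENNReal.ofReal (exp (t * X ω)) ∂μ ≤
      ENNReal.ofReal (exp (t ^ 2 * c / 2))) :
    HasSubgaussianMGF X c μ where
  integrable_exp_mul t := by
    refine (lintegral_ofReal_ne_top_iff_integrable ?_ (ae_of_all _ fun _ ↦ (exp_pos _).le)).mp
      ((h t).trans_lt ENNReal.ofReal_lt_top).ne
    exact (measurable_exp.comp_aemeasurable (hX.const_mul t)).aestronglyMeasurable
  mgf_le t := by
    rw [mgf, integral_eq_lintegral_of_nonneg_ae (ae_of_all _ fun _ ↦ (exp_pos _).le)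
      (measurable_exp.comp_aemeasurable (hX.const_mul t)).aestronglyMeasurable]
    refine ENNReal.toReal_le_of_le_ofReal (exp_pos _).le ((h t).trans_eq ?_)
    ring_nf

lemma ProbabilityTheory.HasSubgaussianMGF.measure_le_abs_le [IsFiniteMeasure μ]
    (h : HasSubgaussianMGF X c μ) {ε : ℝ} (hε : 0 ≤ ε) :
    μ {ω | ε ≤ |X ω|} ≤ ENNReal.ofReal (2 * exp (-ε ^ 2 / (2 * c))) := by
  have h_tail {Y : Ω → ℝ} (hY : HasSubgaussianMGF Y c μ) :
      μ {ω | ε ≤ Y ω} ≤ ENNReal.ofReal (exp (-ε ^ 2 / (2 * c))) := by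
    rw [← ofReal_measureReal]
    exact ENNReal.ofReal_le_ofReal (hY.measure_ge_le hε)
  calc μ {ω | ε ≤ |X ω|} = μ ({ω | ε ≤ X ω} ∪ {ω | ε ≤ (-X) ω}) := by
        simp only [le_abs, Set.ofPred_or, Pi.neg_apply]
    _ ≤ μ {ω | ε ≤ X ω} + μ {ω | ε ≤ (-X) ω} := measure_union_le _ _
    _ ≤ ENNReal.ofReal (exp (-ε ^ 2 / (2 * c))) + ENNReal.ofReal (exp (-ε ^ 2 / (2 * c))) :=
        add_le_add (h_tail h) (h_tail h.neg)
    _ = ENNReal.ofReal (2 * exp (-ε ^ 2 / (2 * c))) := by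
        rw [← ENNReal.ofReal_add (exp_pos _).le (exp_pos _).le, ← two_mul]

noncomputable def sampleMean (G : ℕ → Ω → ℝ) (n : ℕ) (ω : Ω) : ℝ :=
  1 / (n : ℝ) * ∑ t ∈ Finset.Icc 1 n, G t ω

lemma measurable_sampleMean {G : ℕ → Ω → ℝ} (hG : ∀ t, Measurable (G t)) (n : ℕ) :
    Measurable (sampleMean G n) := by
  unfold sampleMean; fun_prop

variable {G : ℕ → Ω → ℝ} {m : ℝ}

lemma measure_le_abs_sampleMean_sub_le [IsFiniteMeasure μ] (hindep : iIndepFun G μ)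
    (hsub : ∀ t, HasSubgaussianMGF (fun ω ↦ G t ω - m) c μ)
    {n : ℕ} (hn : 0 < n) {ε : ℝ} (hε : 0 ≤ ε) :
    μ {ω | ε ≤ |sampleMean G n ω - m|} ≤ ENNReal.ofReal (2 * exp (-(n * ε ^ 2 / (2 * c)))) := by
  have hindep' : iIndepFun (fun t ω ↦ G t ω - m) μ :=
    hindep.comp (fun _ x ↦ x - m) fun _ ↦ measurable_id.sub_const m
  have hsum := HasSubgaussianMGF.sum_of_iIndepFun hindep' (s := Finset.Icc 1 n)
    fun t _ ↦ hsub t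
  have hn' : (0 : ℝ) < n := Nat.cast_pos.mpr hn
  convert hsum.measure_le_abs_le (mul_nonneg hn'.le hε) using 3
  · ext ω
    rw [Finset.sum_sub_distrib, Finset.sum_const, Nat.card_Icc, add_tsub_cancel_right,
      nsmul_eq_mul, ← le_div_iff₀' hn', ← Nat.abs_cast, ← abs_div, Nat.abs_cast]
    congr! 2
    rw [sampleMean]; field_simp
  · simp only [Finset.sum_const, Nat.card_Icc, add_tsub_cancel_right, nsmul_eq_mul,
      NNReal.coe_mul, NNReal.coe_natCast]
    field_simp

lemma sqrt_le_abs_sub_of_abs_le_sqrt {x r : ℝ} (hx : |x| ≤ √r) (hr : r ≤ 3 * m ^ 2 / 8) :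
    √(3 * m ^ 2 / 20) ≤ |x - m| := by
  -- `49 / 80` and `31 / 80` are rational bounds for `√(3 / 8)` and `1 - √(3 / 8)`
  have hxm : |x| ≤ 49 / 80 * |m| :=
    hx.trans (sqrt_le_iff.mpr ⟨by positivity, by nlinarith [sq_abs m]⟩)
  have hsub : |m| - |x| ≤ |x - m| := by rw [abs_sub_comm]; exact abs_sub_abs_le_abs_sub m x
  exact (sqrt_le_iff.mpr ⟨by positivity, by nlinarith [sq_abs m]⟩ :
    √(3 * m ^ 2 / 20) ≤ 31 / 80 * |m|).trans (by linarith)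

lemma measure_abs_sampleMean_le_sqrt_le [IsFiniteMeasure μ] (hindep : iIndepFun G μ)
    (hsub : ∀ t, HasSubgaussianMGF (fun ω ↦ G t ω - m) c μ)
    {n : ℕ} (hn : 0 < n) {r : ℝ} (hr : r ≤ 3 * m ^ 2 / 8) :
    μ {ω | |sampleMean G n ω| ≤ √r} ≤
      ENNReal.ofReal (2 * exp (-(n * (3 * m ^ 2 / 20) / (2 * c)))) := by
  calc μ {ω | |sampleMean G n ω| ≤ √r}
      ≤ μ {ω | √(3 * m ^ 2 / 20) ≤ |sampleMean G n ω - m|} :=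
        measure_mono fun _ hω ↦ sqrt_le_abs_sub_of_abs_le_sqrt hω hr
    _ ≤ _ := by
        convert measure_le_abs_sampleMean_sub_le hindep hsub hn (sqrt_nonneg _) using 6
        rw [sq_sqrt (by positivity)]

end Subgaussian

lemma log_log_le_log_add_div {x A B : ℝ} (hx : 1 < x) (hB : 0 < B) (hA : 1 ≤ A)
    (hBA : log B ≤ A) : log (log x) ≤ log A + x / B := by
  have hA0 : 0 < A := by linarith
  have hx0 : 0 < x := by linarith
  suffices hlog : log x ≤ A * exp (x / B) by
    calc log (log x) ≤ log (A * exp (x / B)) := log_le_log (log_pos hx) hlog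
      _ = log A + x / B := by rw [log_mul hA0.ne' (exp_pos _).ne', log_exp]
  -- `log y ≤ y - 1` is sharp enough at `y = A x / B`, once the scale `B / A` is split off
  calc log x = log (B / A) + log (A * x / B) := by
        rw [← log_mul (by positivity) (by positivity)]; congr 1; field_simp
    _ ≤ (log B - log A) + (A * x / B - 1) := by
        rw [log_div hB.ne' hA0.ne']; gcongr; exact log_le_sub_one_of_pos (by positivity)
    _ ≤ A * (x / B + 1) := by rw [mul_div_assoc, mul_add]; linarith [log_nonneg hA]
    _ ≤ A * exp (x / B) := by gcongr; exact add_one_le_exp _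

lemma one_le_log_of_three_le {y : ℝ} (hy : 3 ≤ y) : 1 ≤ log y :=
  (le_log_iff_exp_le (by linarith)).mpr (exp_one_lt_three.le.trans hy)

section ConfidenceRadius

variable {q ρ : ℝ}

lemma one_le_log_mul_div (hq : 0 < q) (hq1 : q ≤ 1) (hρ : 1 ≤ ρ) :
    1 ≤ log (240 * ρ / q) :=
  one_le_log_of_three_le <| by rw [le_div_iff₀ hq]; nlinarith

lemma two_le_log_mul_log (hq : 0 < q) (hq1 : q ≤ 1) (hρ : 1 ≤ ρ) :
    2 ≤ log (12 / q * log (240 * ρ / q)) := by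
  have h12 : 12 ≤ 12 / q * log (240 * ρ / q) := by
    have := one_le_log_mul_div hq hq1 hρ
    have : 12 ≤ 12 / q := by rw [le_div_iff₀ hq]; linarith
    nlinarith
  rw [le_log_iff_exp_le (by linarith), show (2 : ℝ) = 1 + 1 by norm_num, exp_add]
  nlinarith [exp_one_lt_three, exp_pos 1]

lemma log_six_mul_log_div_le (hq : 0 < q) (hq1 : q ≤ 1) (hρ : 1 ≤ ρ) {x : ℝ} (hx : 1 < x) :
    log (6 * log x / q) ≤ log (12 / q * log (240 * ρ / q)) + x / (40 * ρ) := by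
  have hA := one_le_log_mul_div hq hq1 hρ
  have hBA : log (40 * ρ) ≤ log (240 * ρ / q) :=
    log_le_log (by positivity) (by rw [le_div_iff₀ hq]; nlinarith)
  have hloglog := log_log_le_log_add_div hx (by positivity) hA hBA
  have h612 : log 6 ≤ log 12 := log_le_log (by norm_num) (by norm_num)
  rw [log_div (by have := log_pos hx; positivity) hq.ne', log_mul (by norm_num) (log_pos hx).ne',
    log_mul (by positivity) (by linarith), log_div (by norm_num) hq.ne']
  linarith

lemma five_mul_sq_div_mul_log_le {σ m : ℝ} (hq : 0 < q) (hq1 : q ≤ 1) (hm : 0 < m ^ 2)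
    (hρ : 1 ≤ σ ^ 2 / m ^ 2) {x : ℝ}
    (hx : 20 * (σ ^ 2 / m ^ 2) * log (12 / q * log (240 * (σ ^ 2 / m ^ 2) / q)) ≤ x) :
    5 * σ ^ 2 / x * log (6 * log x / q) ≤ 3 * m ^ 2 / 8 := by
  set ρ := σ ^ 2 / m ^ 2
  set L := log (12 / q * log (240 * ρ / q))
  have hL : 2 ≤ L := two_le_log_mul_log hq hq1 hρ
  have hx0 : 0 < x := by nlinarith
  have hσ : σ ^ 2 = m ^ 2 * ρ := (mul_div_cancel₀ _ hm.ne').symm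
  calc 5 * σ ^ 2 / x * log (6 * log x / q) ≤ 5 * σ ^ 2 / x * (L + x / (40 * ρ)) := by
        gcongr; exact log_six_mul_log_div_le hq hq1 hρ (by nlinarith)
    _ = m ^ 2 * (5 * ρ * L / x + 1 / 8) := by rw [hσ]; field_simp; ring
    _ ≤ m ^ 2 * (5 * ρ * L / (20 * ρ * L) + 1 / 8) := by gcongr
    _ = 3 * m ^ 2 / 8 := by field_simp; ring

lemma natCast_ceil_add_mul_inv_one_sub_exp_le {L : ℝ} (hρ : 1 ≤ ρ) (hL : 2 ≤ L) :
    (⌈20 * ρ * L⌉₊ : ℝ≥0∞) + ENNReal.ofReal 2 * (1 - ENNReal.ofReal (exp (-(3 / (40 * ρ)))))⁻¹ ≤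
      ENNReal.ofReal (40 * ρ * L + 2) := by
  have hinv := ENNReal.inv_one_sub_ofReal_exp_neg_le (κ := 3 / (40 * ρ)) (by positivity)
  grw [hinv, ← ENNReal.ofReal_natCast, ← ENNReal.ofReal_mul zero_le_two,
    ← ENNReal.ofReal_add (by positivity) (by positivity)]
  refine ENNReal.ofReal_le_ofReal ?_
  have hN : (⌈20 * ρ * L⌉₊ : ℝ) < 20 * ρ * L + 1 := Nat.ceil_lt_add_one (by positivity)
  rw [inv_div]
  nlinarith

end ConfidenceRadius

lemma measure_natCast_lt_le {Ω : Type*} [MeasurableSpace Ω] {μ : Measure Ω}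
    [IsFiniteMeasure μ] {G : ℕ → Ω → ℝ} {q σ m : ℝ} (hindep : iIndepFun G μ)
    (hsub : ∀ t, HasSubgaussianMGF (fun ω ↦ G t ω - m) ⟨σ ^ 2, sq_nonneg σ⟩ μ)
    (hq : 0 < q) (hq1 : q ≤ 1) (hm : 0 < m ^ 2) (hρ : 1 ≤ σ ^ 2 / m ^ 2) {τ : Ω → ℕ∞}
    (hτ : ∀ ω, τ ω = sInf {s : ℕ∞ | ∃ k : ℕ, s = k ∧ 3 ≤ k ∧
      √(5 * σ ^ 2 / k * log (6 * log k / q)) < |sampleMean G k ω|}) {n : ℕ}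
    (hn : 20 * (σ ^ 2 / m ^ 2) * log (12 / q * log (240 * (σ ^ 2 / m ^ 2) / q)) ≤ n) :
    μ {ω | (n : ℕ∞) < τ ω} ≤
      ENNReal.ofReal 2 * ENNReal.ofReal (exp (-(3 / (40 * (σ ^ 2 / m ^ 2))))) ^ n := by
  have h3n : 3 ≤ n := by
    have := two_le_log_mul_log hq hq1 hρ
    exact_mod_cast (by nlinarith : (3 : ℝ) ≤ n)
  calc μ {ω | (n : ℕ∞) < τ ω}
      ≤ μ {ω | |sampleMean G n ω| ≤ √(5 * σ ^ 2 / n * log (6 * log n / q))} :=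
        measure_mono fun ω hω ↦ by
          rw [Set.mem_ofPred_eq, hτ ω, ENat.natCast_lt_sInf_iff] at hω
          exact not_lt.mp fun h ↦ hω n le_rfl ⟨h3n, h⟩
    _ ≤ ENNReal.ofReal (2 * exp (-(n * (3 * m ^ 2 / 20) / (2 * σ ^ 2)))) :=
        measure_abs_sampleMean_le_sqrt_le hindep hsub (by omega)
          (five_mul_sq_div_mul_log_le hq hq1 hm hρ hn)
    _ = ENNReal.ofReal 2 * ENNReal.ofReal (exp (-(3 / (40 * (σ ^ 2 / m ^ 2))))) ^ n := by
        rw [← ENNReal.ofReal_pow (exp_pos _).le, ← exp_nat_mul,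
          ← ENNReal.ofReal_mul zero_le_two]
        congr 3
        field_simp
        ring

theorem subgaussian_sequential_test_sample_complexity_general
    {Ω : Type*} [MeasurableSpace Ω] (P : Measure Ω) [IsProbabilityMeasure P]
    (pc σ m : ℝ) (hpc : 0 < pc) (hpc1 : pc < 1)
    (hm : 0 < |m|) (hmσ : |m| ≤ σ)
    (G : ℕ → Ω → ℝ)
    (hmeas : ∀ t, Measurable (G t))
    (hindep : iIndepFun G P)
    (hsubG : ∀ t, ∀ l : ℝ,
      ∫⁻ ω, ENNReal.ofReal (Real.exp (l * (G t ω - m))) ∂P ≤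
        ENNReal.ofReal (Real.exp (l^2 * σ^2 / 2)))
    (τ : Ω → ℕ∞)
    (hτ : ∀ ω, τ ω = sInf {s : ℕ∞ | ∃ k : ℕ, s = (k : ℕ∞) ∧ 3 ≤ k ∧
      Real.sqrt (5 * σ^2 / k * Real.log (6 * Real.log k / Real.sqrt pc)) <
        |(1 / (k:ℝ)) * ∑ t ∈ Finset.Icc 1 k, G t ω|}) :
    ∫⁻ ω, (τ ω : ℝ≥0∞) ∂P ≤
      ENNReal.ofReal (40 * σ^2 / m^2 *
        Real.log (12 / Real.sqrt pc * Real.log (240 * σ^2 / (Real.sqrt pc * m^2))) + 2) := by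
  have hm2 : 0 < m ^ 2 := by rw [← sq_abs]; positivity
  have hq : 0 < √pc := sqrt_pos.mpr hpc
  have hq1 : √pc ≤ 1 := sqrt_le_one.mpr hpc1.le
  have hρ : 1 ≤ σ ^ 2 / m ^ 2 := by
    rw [le_div_iff₀ hm2, one_mul, ← sq_abs m]; gcongr
  have hsub : ∀ t, HasSubgaussianMGF (fun ω ↦ G t ω - m) ⟨σ ^ 2, sq_nonneg σ⟩ P := fun t ↦
    .of_lintegral_exp_le ((hmeas t).sub_const m).aemeasurable (hsubG t)
  rw [show 240 * σ ^ 2 / (√pc * m ^ 2) = 240 * (σ ^ 2 / m ^ 2) / √pc by field_simp,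
    mul_div_assoc 40]
  calc ∫⁻ ω, (τ ω : ℝ≥0∞) ∂P = ∑' n : ℕ, P {ω | (n : ℕ∞) < τ ω} := by
        refine lintegral_toENNReal_eq_tsum_measure_lt
          (measurableSet_natCast_lt_sInf hτ fun k ↦ ?_)
        exact (MeasurableSet.const _).inter
          (measurableSet_lt measurable_const (measurable_sampleMean hmeas k).abs)
    _ ≤ _ := ENNReal.tsum_le_natCast_add_mul_geometric (fun _ ↦ prob_le_one) fun n hn ↦
        measure_natCast_lt_le hindep hsub hq hq1 hm2 hρ hτ <|
          (Nat.le_ceil _).trans (by exact_mod_cast hn)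
    _ ≤ _ := natCast_ceil_add_mul_inv_one_sub_exp_le hρ (two_le_log_mul_log hq hq1 hρ)

/-- **Sample complexity of the sub-Gaussian local sequential test.**
If `G 1, G 2, …` are i.i.d. with mean `m`, `0 < |m| ≤ σ`, and `G t − m` is
`σ²`-sub-Gaussian, and `τ` is the first `s ≥ 3` at which the sample mean exits the
confidence band of radius `√((5σ²/s)·log(6·log s/√p̌))`, then
`E[τ] ≤ (40σ²/m²)·log((12/√p̌)·log(240σ²/(√p̌·m²))) + 2`. -/
theorem subgaussian_sequential_test_sample_complexity
    {Ω : Type*} [MeasurableSpace Ω] (P : Measure Ω) [IsProbabilityMeasure P]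
    (pc σ m : ℝ) (hpc : 0 < pc) (hpc1 : pc < 1) (hσ : 0 < σ)
    (hm : 0 < |m|) (hmσ : |m| ≤ σ)
    (G : ℕ → Ω → ℝ)
    (hmeas : ∀ t, Measurable (G t))
    (hint : ∀ t, Integrable (G t) P)
    (hindep : iIndepFun G P)
    (hident : ∀ t, Measure.map (G t) P = Measure.map (G 0) P)
    (hmean : ∀ t, ∫ ω, G t ω ∂P = m)
    (hsubG : ∀ t, ∀ l : ℝ,
      ∫⁻ ω, ENNReal.ofReal (Real.exp (l * (G t ω - m))) ∂P ≤
        ENNReal.ofReal (Real.exp (l^2 * σ^2 / 2)))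
    (τ : Ω → ℕ∞)
    (hτ : ∀ ω, τ ω = sInf {s : ℕ∞ | ∃ k : ℕ, s = (k : ℕ∞) ∧ 3 ≤ k ∧
      Real.sqrt (5 * σ^2 / k * Real.log (6 * Real.log k / Real.sqrt pc)) <
        |(1 / (k:ℝ)) * ∑ t ∈ Finset.Icc 1 k, G t ω|}) :
    ∫⁻ ω, (τ ω : ℝ≥0∞) ∂P ≤
      ENNReal.ofReal (40 * σ^2 / m^2 *
        Real.log (12 / Real.sqrt pc * Real.log (240 * σ^2 / (Real.sqrt pc * m^2))) + 2) :=
  subgaussian_sequential_test_sample_complexity_general P pc σ m hpc hpc1 hm hmσ G hmeas hindep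
    hsubG τ hτ
end
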